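/- (The Casimir element acts as a scalar on harmonic homogeneous polynomials.) Let n ≥ 1 and let p ∈ ℝ[x₁,x₂,x₃] be homogeneous of degree n with Δp = 0. Then (D₀∘D₀ + D₁∘D₁ + D₂∘D₂) p = −n(n+1)·p. -/

import Mathlib

open MvPolynomial

/-- Directional derivative along `f₀ = (x₂, −x₁, 0)`. -/
noncomputable def D0 : Module.End ℝ (MvPolynomial (Fin 3) ℝ) :=
  (LinearMap.mulLeft ℝ (X 1 : MvPolynomial (Fin 3) ℝ)).comp (pderiv 0).toLinearMap
    - (LinearMap.mulLeft ℝ (X 0 : MvPolynomial (Fin 3) ℝ)).comp (pderiv 1).toLinearMap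

/-- Directional derivative along `f₁ = (x₃, 0, −x₁)`. -/
noncomputable def D1 : Module.End ℝ (MvPolynomial (Fin 3) ℝ) :=
  (LinearMap.mulLeft ℝ (X 2 : MvPolynomial (Fin 3) ℝ)).comp (pderiv 0).toLinearMap
    - (LinearMap.mulLeft ℝ (X 0 : MvPolynomial (Fin 3) ℝ)).comp (pderiv 2).toLinearMap

/-- Directional derivative along `f₂ = (0, x₃, −x₂)`. -/
noncomputable def D2 : Module.End ℝ (MvPolynomial (Fin 3) ℝ) :=
  (LinearMap.mulLeft ℝ (X 2 : MvPolynomial (Fin 3) ℝ)).comp (pderiv 1).toLinearMap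
    - (LinearMap.mulLeft ℝ (X 1 : MvPolynomial (Fin 3) ℝ)).comp (pderiv 2).toLinearMap


/-- The Laplace operator on `ℝ[x₁,x₂,x₃]`. -/
noncomputable def lap (p : MvPolynomial (Fin 3) ℝ) : MvPolynomial (Fin 3) ℝ :=
  pderiv 0 (pderiv 0 p) + pderiv 1 (pderiv 1 p) + pderiv 2 (pderiv 2 p)

/-!
The Casimir operator `∑ₖ Dₖ²` equals `r² Δ − E² − E`, where `r² = x₁² + x₂² + x₃²` and
`E = ∑ᵢ xᵢ ∂ᵢ` is the Euler operator; this is a direct computation with the Leibniz rule and the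
symmetry of second partial derivatives. On a harmonic `p` homogeneous of degree `n` we have
`Δp = 0` and, by Euler's identity, `E p = n p`, so the right-hand side is `−n² p − n p`.
-/

namespace MvPolynomial

variable {σ R : Type*}

section CommSemiring

variable [CommSemiring R]

theorem pderiv_pderiv_comm (i j : σ) (p : MvPolynomial σ R) :
    pderiv i (pderiv j p) = pderiv j (pderiv i p) := by
  classical
  induction p using MvPolynomial.induction_on with
  | C a => simp
  | add p q hp hq => simp only [map_add, hp, hq]
  | mul_X p k hp =>
    simp only [pderiv_mul, map_add, hp, pderiv_X, Pi.single_apply, apply_ite (pderiv _),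
      pderiv_one, map_zero, ite_self]
    ring

noncomputable def eulerOp [Fintype σ] : Module.End R (MvPolynomial σ R) :=
  ∑ i, LinearMap.mulLeft R (X i) ∘ₗ (pderiv i).toLinearMap

theorem eulerOp_apply [Fintype σ] (p : MvPolynomial σ R) :
    eulerOp p = ∑ i, X i * pderiv i p := by
  simp [eulerOp]

theorem IsHomogeneous.eulerOp_eq [Fintype σ] {n : ℕ} {p : MvPolynomial σ R}
    (hp : p.IsHomogeneous n) : eulerOp p = n • p := by
  rw [eulerOp_apply, hp.sum_X_mul_pderiv]

theorem eulerOp_eulerOp_apply [Fintype σ] (p : MvPolynomial σ R) :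
    eulerOp (eulerOp p) = eulerOp p + ∑ i, ∑ j, X i * X j * pderiv i (pderiv j p) := by
  classical
  simp only [eulerOp_apply, map_sum, pderiv_mul, pderiv_X, Pi.single_apply, mul_add, ite_mul,
    one_mul, zero_mul, mul_ite, mul_zero, Finset.sum_add_distrib, Finset.sum_ite_eq,
    Finset.mem_univ, if_true, mul_assoc]
  rw [Finset.sum_comm]

end CommSemiring

noncomputable def rotationDeriv [CommRing R] (i j : σ) : Module.End R (MvPolynomial σ R) :=
  LinearMap.mulLeft R (X i) ∘ₗ (pderiv j).toLinearMap
    - LinearMap.mulLeft R (X j) ∘ₗ (pderiv i).toLinearMap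

theorem rotationDeriv_rotationDeriv_apply [CommRing R] {i j : σ} (hij : i ≠ j)
    (p : MvPolynomial σ R) :
    rotationDeriv i j (rotationDeriv i j p) =
      X i ^ 2 * pderiv j (pderiv j p) + X j ^ 2 * pderiv i (pderiv i p)
        - 2 * X i * X j * pderiv i (pderiv j p) - X i * pderiv i p - X j * pderiv j p := by
  simp only [rotationDeriv, LinearMap.sub_apply, LinearMap.comp_apply, LinearMap.mulLeft_apply,
    Derivation.coeFn_coe, map_sub, pderiv_mul, pderiv_X_self, pderiv_X_of_ne hij,
    pderiv_X_of_ne hij.symm, pderiv_pderiv_comm j i p]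
  ring

end MvPolynomial

theorem casimir_apply (p : MvPolynomial (Fin 3) ℝ) :
    (D0 ∘ₗ D0 + D1 ∘ₗ D1 + D2 ∘ₗ D2) p =
      (X 0 ^ 2 + X 1 ^ 2 + X 2 ^ 2) * lap p - eulerOp (eulerOp p) - eulerOp p := by
  rw [show D0 = rotationDeriv 1 0 from rfl, show D1 = rotationDeriv 2 0 from rfl,
    show D2 = rotationDeriv 2 1 from rfl, eulerOp_eulerOp_apply]
  simp only [LinearMap.add_apply, LinearMap.comp_apply,
    rotationDeriv_rotationDeriv_apply (by decide : (1 : Fin 3) ≠ 0),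
    rotationDeriv_rotationDeriv_apply (by decide : (2 : Fin 3) ≠ 0),
    rotationDeriv_rotationDeriv_apply (by decide : (2 : Fin 3) ≠ 1),
    eulerOp_apply, Fin.sum_univ_three, lap,
    pderiv_pderiv_comm 1 0 p, pderiv_pderiv_comm 2 0 p, pderiv_pderiv_comm 2 1 p]
  ring

theorem casimir_acts_as_scalar_general (n : ℕ) (p : MvPolynomial (Fin 3) ℝ)
    (hp : p.IsHomogeneous n) (hharm : lap p = 0) :
    (D0 ∘ₗ D0 + D1 ∘ₗ D1 + D2 ∘ₗ D2) p = (-((n : ℝ) * (n + 1))) • p := by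
  have hE : eulerOp p = (n : ℝ) • p := by rw [hp.eulerOp_eq, Nat.cast_smul_eq_nsmul]
  rw [casimir_apply, hharm, mul_zero, hE, map_smul, hE, smul_smul]
  module

/-- The Casimir operator acts on harmonic homogeneous polynomials of degree `n`
as the scalar `−n(n+1)`. -/
theorem casimir_acts_as_scalar (n : ℕ) (hn : 1 ≤ n) (p : MvPolynomial (Fin 3) ℝ)
    (hp : p.IsHomogeneous n) (hharm : lap p = 0) :
    (D0 ∘ₗ D0 + D1 ∘ₗ D1 + D2 ∘ₗ D2) p = (-((n : ℝ) * (n + 1))) • p :=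
  casimir_acts_as_scalar_general n p hp hharm
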